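/- Let h ≥ 1, let U_S be a unitary 2^h × 2^h complex matrix with first column ψ = U_S e₀, and for p ∈ {0,1} let U^{(S)}_{(p)} be the unitary on ℂ² ⊗ ℂ^{2^h} ⊗ ℂ² ⊗ ℂ^{2^h} defined as in the context. Define on ℂ² ⊗ (ℂ² ⊗ ℂ^{2^h} ⊗ ℂ² ⊗ ℂ^{2^h}) the operator U′ = (H ⊗ I)·(|0⟩⟨0| ⊗ U^{(S)}_{(0)} + |1⟩⟨1| ⊗ (i·U^{(S)}_{(1)}))·(H ⊗ I), with H = (1/√2)[[1,1],[1,−1]] acting on the new first qubit. Then U′ is unitary, and for every k ∈ {0, …, 2^h−1}, writing U′(e₀ ⊗ e₀ ⊗ e₀ ⊗ e₀ ⊗ e_k) = e₀ ⊗ e₀ ⊗ u + r, where r is orthogonal to all vectors of the form e₀ ⊗ e₀ ⊗ v, one has exactly u = (1/2)·ψ_k · (e₀ ⊗ e₀ ⊗ e_k). In particular, the compression (⟨0| ⊗ ⟨0| ⊗ ⟨0|^{⊗h} ⊗ ⟨0| ⊗ I)·U′·(|0⟩ ⊗ |0⟩ ⊗ |0⟩^{⊗h} ⊗ |0⟩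 ⊗ I) equals (1/2)·diag(ψ₀, …, ψ_{2^h−1}), so U′ is a (2, 2, 0)-block-encoding of diag(ψ) in which the 2h−1 remaining ancilla qubits return to the zero state. -/

import Mathlib

/-!
Every factor of `U′` is unitary: the one- and middle-qubit gates are Kronecker products of
unitaries, `U_C^S` is block diagonal with blocks `U_S` and `I`, `U_Copy` is a permutation matrix,
`R = 1 - 2Π₀` is the reflection in a star projection, and `|0⟩⟨0| ⊗ A + |1⟩⟨1| ⊗ B` is unitary
whenever `A` and `B` are.

For the amplitudes, the `(0,0)` block of `(H ⊗ V)(|0⟩⟨0| ⊗ P + |1⟩⟨1| ⊗ Q)(H ⊗ V′)` is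
`½ V (P + Q) V′`. With `M = W_p† Z̃ W_p` one has `W_p† G_p W_p = R M` and `W_p† G_p† W_p = M R`,
so the `(0,0)` block of `U^{(S)}_{(p)}` is `-½ (R M + M R)`, which on a column `e₀ ⊗ e₀ ⊗ e_k`
(fixed by `Π₀`) equals `Π₀ M`. Since
`W_p (e₀ ⊗ e₀ ⊗ e_k) = ½ (ψ ⊗ (e₀ + e₁) + i^p e_k ⊗ (e₀ - e₁)) ⊗ e_k`, the operator `Z̃` kills the
diagonal terms and `⟨e₀e₀e_k, M e₀e₀e_k⟩` is `Re ψ_k` for `p = 0` and `Im ψ_k` for `p = 1`. The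
outer Hadamard sandwich then yields `½ (Re ψ_k + i Im ψ_k) = ½ ψ_k`.
-/

namespace DiagBlockEncoding

open Matrix

/-- The index type of the space `ℂ^{2^h} ⊗ ℂ² ⊗ ℂ^{2^h}`. -/
abbrev Ix (h : ℕ) := Fin (2 ^ h) × Fin 2 × Fin (2 ^ h)

/-- The Hadamard gate `H = (1/√2)[[1,1],[1,−1]]`. -/
noncomputable def Hgate : Matrix (Fin 2) (Fin 2) ℂ :=
  (Real.sqrt 2 : ℂ)⁻¹ • !![1, 1; 1, -1]

/-- The phase gate `S = diag(1, i)`. -/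
def Sgate : Matrix (Fin 2) (Fin 2) ℂ := !![1, 0; 0, Complex.I]

/-- The gate `Z = diag(1, −1)`. -/
def Zgate : Matrix (Fin 2) (Fin 2) ℂ := !![1, 0; 0, -1]

/-- `H̃ = I ⊗ H ⊗ I`. -/
noncomputable def Htil (h : ℕ) : Matrix (Ix h) (Ix h) ℂ :=
  Matrix.of fun x y =>
    if x.1 = y.1 ∧ x.2.2 = y.2.2 then Hgate x.2.1 y.2.1 else 0

/-- `S̃ = I ⊗ S ⊗ I`. -/
def Stil (h : ℕ) : Matrix (Ix h) (Ix h) ℂ :=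
  Matrix.of fun x y =>
    if x.1 = y.1 ∧ x.2.2 = y.2.2 then Sgate x.2.1 y.2.1 else 0

/-- `Z̃ = I ⊗ Z ⊗ I`. -/
def Ztil (h : ℕ) : Matrix (Ix h) (Ix h) ℂ :=
  Matrix.of fun x y =>
    if x.1 = y.1 ∧ x.2.2 = y.2.2 then Zgate x.2.1 y.2.1 else 0

/-- `R = (I − 2·Π₀) ⊗ I`, where `Π₀` projects onto `e₀ ⊗ e₀` of the first two
registers. -/
def Rop (h : ℕ) : Matrix (Ix h) (Ix h) ℂ :=
  Matrix.of fun x y =>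
    if x.2.2 = y.2.2 then
      (if x.1 = y.1 ∧ x.2.1 = y.2.1 then 1 else 0) -
        2 * (if x.1 = 0 ∧ x.2.1 = 0 ∧ y.1 = 0 ∧ y.2.1 = 0 then 1 else 0)
    else 0

/-- `U_C^S = (U_S ⊗ |0⟩⟨0| + I ⊗ |1⟩⟨1|) ⊗ I`: apply `U_S` to the first
register controlled on the middle qubit being `|0⟩`. -/
def UCS (h : ℕ) (U : Matrix (Fin (2 ^ h)) (Fin (2 ^ h)) ℂ) :
    Matrix (Ix h) (Ix h) ℂ :=
  Matrix.of fun x y =>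
    if x.2.2 = y.2.2 then
      (if x.2.1 = 0 ∧ y.2.1 = 0 then U x.1 y.1 else 0) +
        (if x.1 = y.1 ∧ x.2.1 = 1 ∧ y.2.1 = 1 then 1 else 0)
    else 0

/-- `U_Copy`: controlled on the middle qubit being `|1⟩`, XOR the last register
into the first one: `e_j ⊗ e₁ ⊗ e_k ↦ e_{j⊕k} ⊗ e₁ ⊗ e_k`. -/
def UCopy (h : ℕ) : Matrix (Ix h) (Ix h) ℂ :=
  Matrix.of fun x y =>
    if x.2.1 = y.2.1 ∧ x.2.2 = y.2.2 ∧
        (x.1 : ℕ) = (if y.2.1 = 1 then (y.1 : ℕ) ^^^ (y.2.2 : ℕ) else (y.1 : ℕ))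
    then 1 else 0

/-- `W_p = H̃ · S̃^p · U_Copy · U_C^S · H̃`. -/
noncomputable def Wop (h : ℕ) (U : Matrix (Fin (2 ^ h)) (Fin (2 ^ h)) ℂ)
    (p : ℕ) : Matrix (Ix h) (Ix h) ℂ :=
  Htil h * (Stil h) ^ p * UCopy h * UCS h U * Htil h

/-- `G_p = W_p · R · W_p† · Z̃`. -/
noncomputable def Gop (h : ℕ) (U : Matrix (Fin (2 ^ h)) (Fin (2 ^ h)) ℂ)
    (p : ℕ) : Matrix (Ix h) (Ix h) ℂ :=
  Wop h U p * Rop h * (Wop h U p)ᴴ * Ztil h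

/-- The basis vector `e₀ ⊗ e₀ ⊗ e_k` of `ℂ^{2^h} ⊗ ℂ² ⊗ ℂ^{2^h}`. -/
def eVec (h : ℕ) (k : Fin (2 ^ h)) : Ix h → ℂ :=
  fun x => if x = (0, 0, k) then 1 else 0

/-- The gate `X = [[0,1],[1,0]]`. -/
def Xgate : Matrix (Fin 2) (Fin 2) ℂ := !![0, 1; 1, 0]

/-- Tensor product of a one-qubit gate with an operator on
`ℂ^{2^h} ⊗ ℂ² ⊗ ℂ^{2^h}`. -/
def qTens (h : ℕ) (A : Matrix (Fin 2) (Fin 2) ℂ) (B : Matrix (Ix h) (Ix h) ℂ) :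
    Matrix (Fin 2 × Ix h) (Fin 2 × Ix h) ℂ :=
  Matrix.of fun x y => A x.1 y.1 * B x.2 y.2

/-- The controlled choice `|0⟩⟨0| ⊗ A + |1⟩⟨1| ⊗ B`. -/
def ctrlChoice (h : ℕ) (A B : Matrix (Ix h) (Ix h) ℂ) :
    Matrix (Fin 2 × Ix h) (Fin 2 × Ix h) ℂ :=
  Matrix.of fun x y =>
    if x.1 = 0 ∧ y.1 = 0 then A x.2 y.2
    else if x.1 = 1 ∧ y.1 = 1 then B x.2 y.2
    else 0

/-- `U^{(S)}_{(p)} = ((XZX) ⊗ I)·(H ⊗ W_p†)·(|0⟩⟨0| ⊗ G_p + |1⟩⟨1| ⊗ G_p†)·(H ⊗ W_p)`. -/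
noncomputable def USp (h : ℕ) (U : Matrix (Fin (2 ^ h)) (Fin (2 ^ h)) ℂ)
    (p : ℕ) : Matrix (Fin 2 × Ix h) (Fin 2 × Ix h) ℂ :=
  qTens h (Xgate * Zgate * Xgate) 1 * qTens h Hgate (Wop h U p)ᴴ *
    ctrlChoice h (Gop h U p) (Gop h U p)ᴴ * qTens h Hgate (Wop h U p)

/-- Tensor product of a one-qubit gate with an operator on
`ℂ² ⊗ ℂ^{2^h} ⊗ ℂ² ⊗ ℂ^{2^h}`. -/
def qTens' (h : ℕ) (A : Matrix (Fin 2) (Fin 2) ℂ)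
    (B : Matrix (Fin 2 × Ix h) (Fin 2 × Ix h) ℂ) :
    Matrix (Fin 2 × Fin 2 × Ix h) (Fin 2 × Fin 2 × Ix h) ℂ :=
  Matrix.of fun x y => A x.1 y.1 * B x.2 y.2

/-- The controlled choice `|0⟩⟨0| ⊗ A + |1⟩⟨1| ⊗ B` on
`ℂ² ⊗ (ℂ² ⊗ ℂ^{2^h} ⊗ ℂ² ⊗ ℂ^{2^h})`. -/
def ctrlChoice' (h : ℕ) (A B : Matrix (Fin 2 × Ix h) (Fin 2 × Ix h) ℂ) :
    Matrix (Fin 2 × Fin 2 × Ix h) (Fin 2 × Fin 2 × Ix h) ℂ :=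
  Matrix.of fun x y =>
    if x.1 = 0 ∧ y.1 = 0 then A x.2 y.2
    else if x.1 = 1 ∧ y.1 = 1 then B x.2 y.2
    else 0

/-- `U′ = (H ⊗ I)·(|0⟩⟨0| ⊗ U^{(S)}_{(0)} + |1⟩⟨1| ⊗ (i·U^{(S)}_{(1)}))·(H ⊗ I)`. -/
noncomputable def Uprime (h : ℕ) (U : Matrix (Fin (2 ^ h)) (Fin (2 ^ h)) ℂ) :
    Matrix (Fin 2 × Fin 2 × Ix h) (Fin 2 × Fin 2 × Ix h) ℂ :=
  qTens' h Hgate 1 *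
    ctrlChoice' h (USp h U 0) (Complex.I • USp h U 1) *
    qTens' h Hgate 1


open scoped Kronecker

theorem _root_.IsStarProjection.one_sub_two_mul_mem_unitary {R : Type*} [Ring R] [StarRing R]
    {p : R} (hp : IsStarProjection p) : 1 - 2 * p ∈ unitary R := by
  rw [← neg_sub]
  exact (-⟨_, hp.two_mul_sub_one_mem_unitary⟩ : unitary R).prop

theorem inv_sqrt_two_mul_self : (Real.sqrt 2 : ℂ)⁻¹ * (Real.sqrt 2 : ℂ)⁻¹ = 2⁻¹ := by
  rw [← mul_inv, ← Complex.ofReal_mul, Real.mul_self_sqrt zero_le_two, Complex.ofReal_ofNat]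

section Matrices

variable {R : Type*} {l m n o k : Type*}

theorem isStarProjection_single_one [DecidableEq n] [Fintype n] [Semiring R] [StarRing R]
    (i : n) : IsStarProjection (single i i (1 : R)) :=
  ⟨by simp [IsIdempotentElem, single_mul_single_same],
    by simp [IsSelfAdjoint, star_eq_conjTranspose, conjTranspose_single]⟩

theorem _root_.IsStarProjection.kronecker [Fintype m] [Fintype n] [CommSemiring R] [StarRing R]
    {p : Matrix m m R} {q : Matrix n n R} (hp : IsStarProjection p) (hq : IsStarProjection q) :
    IsStarProjection (p ⊗ₖ q) :=
  ⟨by rw [IsIdempotentElem, ← mul_kronecker_mul, hp.isIdempotentElem.eq, hq.isIdempotentElem.eq],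
    by rw [IsSelfAdjoint, star_eq_conjTranspose, conjTranspose_kronecker, ← star_eq_conjTranspose,
      ← star_eq_conjTranspose, hp.isSelfAdjoint.star_eq, hq.isSelfAdjoint.star_eq]⟩

theorem blockDiagonal_mem_unitary [Fintype m] [DecidableEq m] [Fintype n] [DecidableEq n]
    [Semiring R] [StarRing R] {d : n → Matrix m m R} (hd : ∀ i, d i ∈ unitary (Matrix m m R)) :
    blockDiagonal d ∈ unitary (Matrix (m × n) (m × n) R) := by
  simp only [Unitary.mem_iff, star_eq_conjTranspose] at hd ⊢
  rw [blockDiagonal_conjTranspose, ← blockDiagonal_mul, ← blockDiagonal_mul]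
  simp only [hd, and_self]
  exact blockDiagonal_one

theorem permMatrix_mem_unitary [Fintype n] [DecidableEq n] [Semiring R] [StarRing R]
    (σ : Equiv.Perm n) : σ.permMatrix R ∈ unitary (Matrix n n R) := by
  simp [Unitary.mem_iff, star_eq_conjTranspose, ← permMatrix_mul]

theorem one_kronecker_kronecker_one_mem_unitary [Fintype l] [DecidableEq l] [Fintype m]
    [DecidableEq m] [Fintype n] [DecidableEq n] [Semiring R] [StarRing R] {A : Matrix m m R}
    (hA : A ∈ unitary (Matrix m m R)) :
    (1 : Matrix l l R) ⊗ₖ (A ⊗ₖ (1 : Matrix n n R)) ∈ unitary (Matrix (l × m × n) (l × m × n) R) :=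
  kronecker_mem_unitary (one_mem _) (kronecker_mem_unitary hA (one_mem _))

theorem of_ite_eq_one_kronecker_kronecker_one [DecidableEq l] [DecidableEq n] [MulZeroOneClass R]
    (A : Matrix m m R) :
    (of fun x y : l × m × n => if x.1 = y.1 ∧ x.2.2 = y.2.2 then A x.2.1 y.2.1 else 0) =
      1 ⊗ₖ (A ⊗ₖ 1) := by
  ext ⟨i, a, c⟩ ⟨j, b, c'⟩
  by_cases hij : i = j <;> by_cases hc : c = c' <;> simp [one_apply, hij, hc]

theorem one_kronecker_diagonal_kronecker_one [DecidableEq l] [DecidableEq m] [DecidableEq n]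
    [MulZeroOneClass R] (d : m → R) :
    (1 : Matrix l l R) ⊗ₖ (diagonal d ⊗ₖ (1 : Matrix n n R)) = diagonal fun x => d x.2.1 := by
  rw [← diagonal_one, ← diagonal_one, diagonal_kronecker_diagonal, diagonal_kronecker_diagonal]
  simp

theorem one_kronecker_kronecker_one_mul_apply [Fintype l] [DecidableEq l] [Fintype m] [Fintype n]
    [DecidableEq n] [Semiring R] (A : Matrix m m R) (N : Matrix (l × m × n) k R) (i : l) (a : m)
    (c : n) (y : k) :
    ((1 : Matrix l l R) ⊗ₖ (A ⊗ₖ (1 : Matrix n n R)) * N) (i, a, c) y =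
      ∑ b, A a b * N (i, b, c) y := by
  simp [mul_apply, Fintype.sum_prod_type, one_apply]

theorem blockDiagonal_mul_apply [Fintype m] [Fintype o] [DecidableEq o] [Semiring R]
    (d : o → Matrix m m R) (N : Matrix (m × o) k R) (i : m) (c : o) (y : k) :
    (blockDiagonal d * N) (i, c) y = ∑ j, d c i j * N (j, c) y := by
  simp [mul_apply, Fintype.sum_prod_type, blockDiagonal_apply']

/-- `ctrlChoice h` and `ctrlChoice' h` unfold to this, just as `qTens h` and `qTens' h` unfold
to `⊗ₖ`; the proofs below use both facts by `rfl`. -/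
def controlled [Zero R] (A B : Matrix n n R) : Matrix (Fin 2 × n) (Fin 2 × n) R :=
  of fun x y =>
    if x.1 = 0 ∧ y.1 = 0 then A x.2 y.2
    else if x.1 = 1 ∧ y.1 = 1 then B x.2 y.2
    else 0

theorem controlled_eq_kronecker [Semiring R] (A B : Matrix n n R) :
    controlled A B = single 0 0 1 ⊗ₖ A + single 1 1 1 ⊗ₖ B := by
  ext ⟨a, x⟩ ⟨b, y⟩
  fin_cases a <;> fin_cases b <;> simp [controlled]

theorem controlled_mem_unitary [Fintype n] [DecidableEq n] [CommRing R] [StarRing R]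
    {A B : Matrix n n R} (hA : A ∈ unitary (Matrix n n R)) (hB : B ∈ unitary (Matrix n n R)) :
    controlled A B ∈ unitary (Matrix (Fin 2 × n) (Fin 2 × n) R) := by
  have hsum : (single 0 0 1 + single 1 1 1 : Matrix (Fin 2) (Fin 2) R) = 1 := by
    ext i j; fin_cases i <;> fin_cases j <;> simp
  have h01 : (single 0 0 1 * single 1 1 1 : Matrix (Fin 2) (Fin 2) R) = 0 :=
    single_mul_single_of_ne _ _ _ _ (by decide) _
  have h10 : (single 1 1 1 * single 0 0 1 : Matrix (Fin 2) (Fin 2) R) = 0 :=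
    single_mul_single_of_ne _ _ _ _ (by decide) _
  simp only [Unitary.mem_iff, star_eq_conjTranspose] at hA hB ⊢
  simp only [controlled_eq_kronecker, conjTranspose_add, conjTranspose_kronecker,
    conjTranspose_single, star_one, add_mul, mul_add, ← mul_kronecker_mul, single_mul_single_same,
    h01, h10, zero_kronecker, add_zero, zero_add, mul_one, hA, hB, ← add_kronecker, hsum,
    one_kronecker_one, and_self]

end Matrices

section Gates

theorem conjTranspose_Hgate : Hgateᴴ = Hgate := by
  ext i j
  fin_cases i <;> fin_cases j <;> simp [Hgate, Complex.conj_ofReal]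

theorem Hgate_mul_Hgate : Hgate * Hgate = 1 := by
  ext i j
  fin_cases i <;> fin_cases j <;>
    norm_num [Hgate, mul_apply, Fin.sum_univ_two, inv_sqrt_two_mul_self]

theorem Hgate_mem_unitary : Hgate ∈ unitary (Matrix (Fin 2) (Fin 2) ℂ) := by
  rw [Unitary.mem_iff, star_eq_conjTranspose, conjTranspose_Hgate, Hgate_mul_Hgate, and_self]

theorem Sgate_mem_unitary : Sgate ∈ unitary (Matrix (Fin 2) (Fin 2) ℂ) := by
  refine mem_unitaryGroup_iff.mpr ?_
  ext i j
  fin_cases i <;> fin_cases j <;> simp [Sgate, mul_apply, Fin.sum_univ_two]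

theorem Zgate_mem_unitary : Zgate ∈ unitary (Matrix (Fin 2) (Fin 2) ℂ) := by
  refine mem_unitaryGroup_iff.mpr ?_
  ext i j
  fin_cases i <;> fin_cases j <;> simp [Zgate, mul_apply, Fin.sum_univ_two]

theorem Xgate_mem_unitary : Xgate ∈ unitary (Matrix (Fin 2) (Fin 2) ℂ) := by
  refine mem_unitaryGroup_iff.mpr ?_
  ext i j
  fin_cases i <;> fin_cases j <;> simp [Xgate, mul_apply, Fin.sum_univ_two]

theorem Sgate_eq_diagonal : Sgate = diagonal ![1, Complex.I] := by
  ext i j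
  fin_cases i <;> fin_cases j <;> simp [Sgate]

theorem Zgate_eq_diagonal : Zgate = diagonal ![1, -1] := by
  ext i j
  fin_cases i <;> fin_cases j <;> simp [Zgate]

theorem Xgate_mul_Zgate_mul_Xgate : Xgate * Zgate * Xgate = diagonal ![-1, 1] := by
  ext i j
  fin_cases i <;> fin_cases j <;> simp [Xgate, Zgate, mul_apply, Fin.sum_univ_two]

theorem Hgate_kronecker_mul_controlled_mul_apply_zero {n : Type*} [Fintype n] [DecidableEq n]
    (V P Q V' : Matrix n n ℂ) (x y : n) :
    (Hgate ⊗ₖ V * (controlled P Q * Hgate ⊗ₖ V')) (0, x) (0, y) =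
      2⁻¹ * ((V * (P * V')) x y + (V * (Q * V')) x y) := by
  have hH : ∀ b : Fin 2, (Hgate * (single b b (1 : ℂ) * Hgate)) 0 0 = 2⁻¹ := by
    intro b
    fin_cases b <;> simp [Hgate, mul_apply, Fin.sum_univ_two, inv_sqrt_two_mul_self]
  rw [controlled_eq_kronecker, add_mul, mul_add, ← mul_kronecker_mul, ← mul_kronecker_mul,
    ← mul_kronecker_mul, ← mul_kronecker_mul, Matrix.add_apply, kronecker_apply, kronecker_apply,
    hH, hH, mul_add]

end Gates

section Registers

variable {h : ℕ}

theorem Htil_eq_kronecker : Htil h = 1 ⊗ₖ (Hgate ⊗ₖ 1) :=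
  of_ite_eq_one_kronecker_kronecker_one Hgate

theorem Stil_eq_kronecker : Stil h = 1 ⊗ₖ (Sgate ⊗ₖ 1) :=
  of_ite_eq_one_kronecker_kronecker_one Sgate

theorem Ztil_eq_kronecker : Ztil h = 1 ⊗ₖ (Zgate ⊗ₖ 1) :=
  of_ite_eq_one_kronecker_kronecker_one Zgate

theorem Stil_eq_diagonal : Stil h = diagonal fun x => ![1, Complex.I] x.2.1 := by
  rw [Stil_eq_kronecker, Sgate_eq_diagonal, one_kronecker_diagonal_kronecker_one]

theorem Ztil_eq_diagonal : Ztil h = diagonal fun x => ![1, -1] x.2.1 := by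
  rw [Ztil_eq_kronecker, Zgate_eq_diagonal, one_kronecker_diagonal_kronecker_one]

theorem conjTranspose_Ztil : (Ztil h)ᴴ = Ztil h := by
  rw [Ztil_eq_diagonal, diagonal_conjTranspose]
  congr 1
  funext ⟨i, a, c⟩
  fin_cases a <;> simp

theorem Htil_mul_apply {k : Type*} (N : Matrix (Ix h) k ℂ) (i : Fin (2 ^ h)) (a : Fin 2)
    (c : Fin (2 ^ h)) (y : k) : (Htil h * N) (i, a, c) y = ∑ b, Hgate a b * N (i, b, c) y := by
  rw [Htil_eq_kronecker, one_kronecker_kronecker_one_mul_apply]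

variable (h) in
def copyPerm : Equiv.Perm (Ix h) :=
  Function.Involutive.toPerm (fun x => (if x.2.1 = 1 then x.1 ^^^ x.2.2 else x.1, x.2)) <| by
    rintro ⟨j, b, c⟩
    fin_cases b <;> simp

theorem copyPerm_apply (j : Fin (2 ^ h)) (b : Fin 2) (c : Fin (2 ^ h)) :
    copyPerm h (j, b, c) = (if b = 1 then j ^^^ c else j, b, c) := rfl

theorem UCopy_eq_permMatrix : UCopy h = (copyPerm h).permMatrix ℂ := by
  ext ⟨i, a, c⟩ ⟨j, b, c'⟩
  have hxor : ((i : ℕ) = j ^^^ c') ↔ i ^^^ c' = j := by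
    rw [← Fin.xor_val_of_two_pow, Fin.val_inj, xor_eq_iff_left_eq]
  fin_cases a <;> fin_cases b <;> by_cases hc : c = c' <;>
    simp [UCopy, copyPerm_apply, PEquiv.toMatrix_apply, Fin.val_inj, hc, hxor, eq_comm]

theorem UCS_eq_blockDiagonal (U : Matrix (Fin (2 ^ h)) (Fin (2 ^ h)) ℂ) :
    UCS h U = blockDiagonal fun bc => if bc.1 = 0 then U else 1 := by
  ext ⟨i, a, c⟩ ⟨j, b, c'⟩
  fin_cases a <;> fin_cases b <;> by_cases hc : c = c' <;>
    simp [UCS, blockDiagonal_apply, one_apply, hc]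

variable (h) in
def Pi0 : Matrix (Ix h) (Ix h) ℂ := single 0 0 1 ⊗ₖ (single 0 0 1 ⊗ₖ 1)

theorem isStarProjection_Pi0 : IsStarProjection (Pi0 h) :=
  (isStarProjection_single_one 0).kronecker ((isStarProjection_single_one 0).kronecker (.one _))

theorem Pi0_apply (i : Fin (2 ^ h)) (a : Fin 2) (c : Fin (2 ^ h)) (y : Ix h) :
    Pi0 h (i, a, c) y = if i = 0 ∧ a = 0 then (if y = (0, 0, c) then 1 else 0) else 0 := by
  obtain ⟨j, b, c'⟩ := y
  simp only [Pi0, kronecker_apply, single_apply, one_apply, Prod.mk.injEq]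
  split_ifs <;> grind

theorem Pi0_mul_apply {k : Type*} (N : Matrix (Ix h) k ℂ) (i : Fin (2 ^ h)) (a : Fin 2)
    (c : Fin (2 ^ h)) (y : k) :
    (Pi0 h * N) (i, a, c) y = if i = 0 ∧ a = 0 then N (0, 0, c) y else 0 := by
  by_cases hia : i = 0 ∧ a = 0 <;> simp [mul_apply, Pi0_apply, hia]

theorem mul_Pi0_apply_col {k : Type*} (N : Matrix k (Ix h) ℂ) (z : k) (c : Fin (2 ^ h)) :
    (N * Pi0 h) z (0, 0, c) = N z (0, 0, c) := by
  rw [mul_apply, Fintype.sum_eq_single (0, 0, c)]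
  · simp [Pi0_apply]
  · rintro ⟨i, a, c'⟩ hne
    simp only [Pi0_apply]
    split_ifs
    · exact absurd (by simp_all) hne
    all_goals simp

theorem Rop_eq : Rop h = 1 - 2 * Pi0 h := by
  ext ⟨i, a, c⟩ ⟨j, b, c'⟩
  simp only [Rop, of_apply, Matrix.sub_apply, two_mul, Matrix.add_apply, Pi0_apply, one_apply,
    Prod.mk.injEq]
  split_ifs <;> grind

theorem conjTranspose_Rop : (Rop h)ᴴ = Rop h := by
  have hP := (isStarProjection_Pi0 (h := h)).isSelfAdjoint
  rw [Rop_eq, two_mul]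
  exact (IsSelfAdjoint.one _).sub (hP.add hP)

end Registers

section Unitarity

variable {h : ℕ} {U : Matrix (Fin (2 ^ h)) (Fin (2 ^ h)) ℂ}

theorem Rop_mem_unitary : Rop h ∈ unitary (Matrix (Ix h) (Ix h) ℂ) :=
  Rop_eq ▸ isStarProjection_Pi0.one_sub_two_mul_mem_unitary

theorem Wop_mem_unitary (hU : U ∈ unitary (Matrix (Fin (2 ^ h)) (Fin (2 ^ h)) ℂ)) (p : ℕ) :
    Wop h U p ∈ unitary (Matrix (Ix h) (Ix h) ℂ) := by
  have hH : Htil h ∈ unitary (Matrix (Ix h) (Ix h) ℂ) :=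
    Htil_eq_kronecker ▸ one_kronecker_kronecker_one_mem_unitary Hgate_mem_unitary
  have hS : Stil h ∈ unitary (Matrix (Ix h) (Ix h) ℂ) :=
    Stil_eq_kronecker ▸ one_kronecker_kronecker_one_mem_unitary Sgate_mem_unitary
  have hCopy : UCopy h ∈ unitary (Matrix (Ix h) (Ix h) ℂ) :=
    UCopy_eq_permMatrix ▸ permMatrix_mem_unitary _
  have hCS : UCS h U ∈ unitary (Matrix (Ix h) (Ix h) ℂ) :=
    UCS_eq_blockDiagonal U ▸ blockDiagonal_mem_unitary fun _ => by
      split_ifs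
      exacts [hU, one_mem _]
  exact mul_mem (mul_mem (mul_mem (mul_mem hH (pow_mem hS p)) hCopy) hCS) hH

theorem Gop_mem_unitary (hU : U ∈ unitary (Matrix (Fin (2 ^ h)) (Fin (2 ^ h)) ℂ)) (p : ℕ) :
    Gop h U p ∈ unitary (Matrix (Ix h) (Ix h) ℂ) :=
  mul_mem (mul_mem (mul_mem (Wop_mem_unitary hU p) Rop_mem_unitary)
    (Unitary.star_mem (Wop_mem_unitary hU p)))
    (Ztil_eq_kronecker ▸ one_kronecker_kronecker_one_mem_unitary Zgate_mem_unitary)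

theorem USp_mem_unitary (hU : U ∈ unitary (Matrix (Fin (2 ^ h)) (Fin (2 ^ h)) ℂ)) (p : ℕ) :
    USp h U p ∈ unitary (Matrix (Fin 2 × Ix h) (Fin 2 × Ix h) ℂ) := by
  have hW := Wop_mem_unitary hU p
  have hG := Gop_mem_unitary hU p
  have hXZX := mul_mem (mul_mem Xgate_mem_unitary Zgate_mem_unitary) Xgate_mem_unitary
  exact mul_mem (mul_mem (mul_mem (kronecker_mem_unitary hXZX (one_mem _))
    (kronecker_mem_unitary Hgate_mem_unitary (Unitary.star_mem hW)))
    (controlled_mem_unitary hG (Unitary.star_mem hG))) (kronecker_mem_unitary Hgate_mem_unitary hW)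

theorem Uprime_mem_unitary (hU : U ∈ unitary (Matrix (Fin (2 ^ h)) (Fin (2 ^ h)) ℂ)) :
    Uprime h U ∈ unitary (Matrix (Fin 2 × Fin 2 × Ix h) (Fin 2 × Fin 2 × Ix h) ℂ) := by
  have hHI := kronecker_mem_unitary Hgate_mem_unitary
    (one_mem (unitary (Matrix (Fin 2 × Ix h) (Fin 2 × Ix h) ℂ)))
  have hI : Complex.I ∈ unitary ℂ := by simp [Unitary.mem_iff]
  exact mul_mem (mul_mem hHI (controlled_mem_unitary (USp_mem_unitary hU 0)
    (Unitary.smul_mem_of_mem hI (USp_mem_unitary hU 1)))) hHI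

end Unitarity

section Amplitudes

variable {h : ℕ} {U : Matrix (Fin (2 ^ h)) (Fin (2 ^ h)) ℂ}

theorem Wop_apply_col (p : ℕ) (k : Fin (2 ^ h)) (x : Ix h) :
    Wop h U p x (0, 0, k) = if x.2.2 = k then
      2⁻¹ * (U x.1 0 + (if x.1 = k then Complex.I ^ p else 0) * ![1, -1] x.2.1) else 0 := by
  have hH : ∀ x : Ix h, Htil h x (0, 0, k) =
      if x.1 = 0 ∧ x.2.2 = k then (Real.sqrt 2 : ℂ)⁻¹ else 0 := by
    rintro ⟨i, a, c⟩
    fin_cases a <;> simp [Htil, Hgate, and_comm]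
  have hCS : ∀ x : Ix h, (UCS h U * Htil h) x (0, 0, k) = if x.2.2 = k then
      (Real.sqrt 2 : ℂ)⁻¹ * (if x.2.1 = 0 then U x.1 0 else if x.1 = 0 then 1 else 0) else 0 := by
    rintro ⟨i, a, c⟩
    rw [UCS_eq_blockDiagonal, blockDiagonal_mul_apply]
    fin_cases a <;> by_cases hc : c = k <;> simp [hH, hc, one_apply, mul_comm]
  have hCopy : ∀ x : Ix h, (UCopy h * (UCS h U * Htil h)) x (0, 0, k) = if x.2.2 = k then
      (Real.sqrt 2 : ℂ)⁻¹ * (if x.2.1 = 0 then U x.1 0 else if x.1 = k then 1 else 0) else 0 := by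
    rintro ⟨i, a, c⟩
    rw [UCopy_eq_permMatrix, PEquiv.toMatrix_toPEquiv_mul, submatrix_apply, id, copyPerm_apply,
      hCS]
    fin_cases a <;> by_cases hc : c = k <;> simp [hc]
  have hS : ∀ x : Ix h, (Stil h ^ p * (UCopy h * (UCS h U * Htil h))) x (0, 0, k) =
      if x.2.2 = k then (Real.sqrt 2 : ℂ)⁻¹ *
        (if x.2.1 = 0 then U x.1 0 else Complex.I ^ p * if x.1 = k then 1 else 0) else 0 := by
    rintro ⟨i, a, c⟩
    rw [Stil_eq_diagonal, diagonal_pow, diagonal_mul, hCopy]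
    fin_cases a <;> by_cases hc : c = k <;> simp [hc, mul_comm]
  obtain ⟨i, a, c⟩ := x
  rw [show Wop h U p = Htil h * (Stil h ^ p * (UCopy h * (UCS h U * Htil h))) by
      simp only [Wop, mul_assoc], Htil_mul_apply, Fin.sum_univ_two, hS, hS]
  fin_cases a <;> by_cases hc : c = k <;> by_cases hi : i = k <;>
    simp only [Hgate, Fin.zero_eta, Fin.mk_one, Fin.isValue, Matrix.smul_apply, of_apply, cons_val',
      cons_val_zero, cons_val_one, cons_val_fin_one, smul_eq_mul, hc, hi, ↓reduceIte, mul_one,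
      one_ne_zero, mul_zero, add_zero, mul_neg, neg_mul, neg_zero, ← mul_assoc,
      inv_sqrt_two_mul_self] <;> ring

theorem sum_star_mul_sign_mul (ψ t : ℂ) :
    ∑ b : Fin 2, star (2⁻¹ * (ψ + t * ![1, -1] b)) * (![1, -1] b * (2⁻¹ * (ψ + t * ![1, -1] b))) =
      2⁻¹ * (star ψ * t + star t * ψ) := by
  simp only [Fin.sum_univ_two, Matrix.cons_val_zero, Matrix.cons_val_one, Matrix.cons_val_fin_one,
    star_mul', star_add, star_neg, star_one, star_inv₀, star_ofNat, mul_one, neg_mul]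
  ring

theorem Wop_conjTranspose_mul_Ztil_mul_Wop_apply (p : ℕ) (c k : Fin (2 ^ h)) :
    ((Wop h U p)ᴴ * (Ztil h * Wop h U p)) (0, 0, c) (0, 0, k) =
      if c = k then 2⁻¹ * (star (U k 0) * Complex.I ^ p + star (Complex.I ^ p) * U k 0)
      else 0 := by
  rw [mul_apply]
  simp only [conjTranspose_apply, Ztil_eq_diagonal, diagonal_mul, Wop_apply_col,
    Fintype.sum_prod_type]
  by_cases hck : c = k
  · subst hck
    calc _ = ∑ j, 2⁻¹ * (star (U j 0) * (if j = c then Complex.I ^ p else 0) +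
            star (if j = c then Complex.I ^ p else 0) * U j 0) := by
          refine Finset.sum_congr rfl fun j _ => ?_
          rw [← sum_star_mul_sign_mul]
          refine Finset.sum_congr rfl fun b _ => ?_
          rw [Fintype.sum_eq_single c fun c' hc' => by simp [hc']]
          simp only [if_true, ite_mul, zero_mul]
      _ = _ := by
          rw [Fintype.sum_eq_single c fun j hj => by simp [hj]]
          simp only [if_true]
  · rw [if_neg hck]
    refine Finset.sum_eq_zero fun j _ => Finset.sum_eq_zero fun b _ =>
      Finset.sum_eq_zero fun c' _ => ?_
    by_cases hc' : c' = c
    · simp [hc', hck]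
    · simp [hc']

theorem Wop_conjTranspose_mul_Gop_mul_Wop
    (hU : U ∈ unitary (Matrix (Fin (2 ^ h)) (Fin (2 ^ h)) ℂ)) (p : ℕ) :
    (Wop h U p)ᴴ * (Gop h U p * Wop h U p) = Rop h * ((Wop h U p)ᴴ * (Ztil h * Wop h U p)) := by
  have hW : (Wop h U p)ᴴ * Wop h U p = 1 := Unitary.star_mul_self_of_mem (Wop_mem_unitary hU p)
  simp only [Gop, Matrix.mul_assoc]
  rw [← Matrix.mul_assoc (Wop h U p)ᴴ, hW, Matrix.one_mul]

theorem Wop_conjTranspose_mul_Gop_conjTranspose_mul_Wop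
    (hU : U ∈ unitary (Matrix (Fin (2 ^ h)) (Fin (2 ^ h)) ℂ)) (p : ℕ) :
    (Wop h U p)ᴴ * ((Gop h U p)ᴴ * Wop h U p) = (Wop h U p)ᴴ * (Ztil h * Wop h U p) * Rop h := by
  have hW : (Wop h U p)ᴴ * Wop h U p = 1 := Unitary.star_mul_self_of_mem (Wop_mem_unitary hU p)
  simp only [Gop, conjTranspose_mul, conjTranspose_conjTranspose, conjTranspose_Rop,
    conjTranspose_Ztil, Matrix.mul_assoc, hW, Matrix.mul_one]

theorem USp_apply_col (hU : U ∈ unitary (Matrix (Fin (2 ^ h)) (Fin (2 ^ h)) ℂ)) (p : ℕ)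
    (z : Ix h) (k : Fin (2 ^ h)) :
    USp h U p (0, z) (0, 0, 0, k) =
      (Pi0 h * ((Wop h U p)ᴴ * (Ztil h * Wop h U p))) z (0, 0, k) := by
  set M := (Wop h U p)ᴴ * (Ztil h * Wop h U p)
  -- `Π₀` fixes the column `e₀ ⊗ e₀ ⊗ e_k`, so `M R = -M` on it
  have hRM : (Rop h * M) z (0, 0, k) + (M * Rop h) z (0, 0, k) =
      -2 * (Pi0 h * M) z (0, 0, k) := by
    rw [Rop_eq, two_mul, sub_mul, mul_sub, add_mul, mul_add, Matrix.one_mul, Matrix.mul_one]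
    simp only [Matrix.sub_apply, Matrix.add_apply, mul_Pi0_apply_col]
    ring
  have hUSp : USp h U p = (Xgate * Zgate * Xgate) ⊗ₖ 1 * (Hgate ⊗ₖ (Wop h U p)ᴴ *
      (controlled (Gop h U p) (Gop h U p)ᴴ * Hgate ⊗ₖ Wop h U p)) := by
    simp only [USp, Matrix.mul_assoc]
    rfl
  rw [hUSp, Xgate_mul_Zgate_mul_Xgate, ← diagonal_one, diagonal_kronecker_diagonal, diagonal_mul,
    Hgate_kronecker_mul_controlled_mul_apply_zero, Wop_conjTranspose_mul_Gop_mul_Wop hU,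
    Wop_conjTranspose_mul_Gop_conjTranspose_mul_Wop hU, hRM]
  simp only [Matrix.cons_val_zero]
  ring

theorem Uprime_apply_col (hU : U ∈ unitary (Matrix (Fin (2 ^ h)) (Fin (2 ^ h)) ℂ)) (z : Ix h)
    (k : Fin (2 ^ h)) : Uprime h U (0, 0, z) (0, 0, 0, 0, k) = 2⁻¹ * U k 0 * eVec h k z := by
  have hUprime : Uprime h U =
      Hgate ⊗ₖ 1 * (controlled (USp h U 0) (Complex.I • USp h U 1) * Hgate ⊗ₖ 1) := by
    simp only [Uprime, Matrix.mul_assoc]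
    rfl
  rw [hUprime, Hgate_kronecker_mul_controlled_mul_apply_zero, Matrix.one_mul, Matrix.one_mul,
    Matrix.mul_one, Matrix.mul_one, Matrix.smul_apply, USp_apply_col hU, USp_apply_col hU]
  obtain ⟨i, a, c⟩ := z
  rw [Pi0_mul_apply, Pi0_mul_apply, Wop_conjTranspose_mul_Ztil_mul_Wop_apply,
    Wop_conjTranspose_mul_Ztil_mul_Wop_apply]
  by_cases hia : i = 0 ∧ a = 0
  · obtain ⟨rfl, rfl⟩ := hia
    by_cases hc : c = k
    · subst hc
      simp only [and_self, if_true, eVec, pow_zero, pow_one, star_one, smul_eq_mul, mul_one,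
        one_mul, Complex.star_def, Complex.conj_I]
      linear_combination (4⁻¹ * (starRingEnd ℂ (U c 0) - U c 0)) * Complex.I_sq
    · simp [eVec, hc]
  · have hz : (i, a, c) ≠ (0, 0, k) := fun he => hia ⟨congrArg Prod.fst he, congrArg (·.2.1) he⟩
    simp [hia, eVec, hz]

end Amplitudes

theorem Uprime_block_encodes_diag_general (h : ℕ)
    (U : Matrix (Fin (2 ^ h)) (Fin (2 ^ h)) ℂ)
    (hU₁ : U * Uᴴ = 1) :
    (Uprime h U * (Uprime h U)ᴴ = 1 ∧ (Uprime h U)ᴴ * Uprime h U = 1) ∧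
    (∀ k : Fin (2 ^ h), ∀ z : Ix h,
      (Uprime h U).mulVec (fun x => if x = (0, (0, (0, 0, k))) then 1 else 0)
          (0, (0, z)) =
        (1 / 2 : ℂ) * U k 0 * eVec h k z) ∧
    (∀ k k' : Fin (2 ^ h),
      Uprime h U (0, (0, (0, 0, k))) (0, (0, (0, 0, k'))) =
        (1 / 2 : ℂ) * (if k = k' then U k 0 else 0)) := by
  have hU : U ∈ unitary (Matrix (Fin (2 ^ h)) (Fin (2 ^ h)) ℂ) := mem_unitaryGroup_iff.mpr hU₁
  have hU' := Uprime_mem_unitary hU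
  refine ⟨⟨Unitary.mul_star_self_of_mem hU', Unitary.star_mul_self_of_mem hU'⟩,
    fun k z => ?_, fun k k' => ?_⟩
  · simp only [mulVec, dotProduct, mul_ite, mul_one, mul_zero, Finset.sum_ite_eq',
      Finset.mem_univ, if_true]
    rw [Uprime_apply_col hU, one_div]
  · rw [Uprime_apply_col hU, one_div]
    by_cases hk : k = k' <;> simp [eVec, hk]

/-- diagonal block-encoding of amplitudes. `U′` is unitary;
the component of `U′(e₀ ⊗ e₀ ⊗ e₀ ⊗ e₀ ⊗ e_k)` on the first two qubits being
`|0⟩|0⟩` is exactly `(1/2)·ψ_k·(e₀ ⊗ e₀ ⊗ e_k)`; in particular the compression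
of `U′` onto the all-zero ancillas is `(1/2)·diag(ψ)`, so `U′` is a
`(2,2,0)`-block-encoding of `diag(ψ)` whose `2h−1` remaining ancilla qubits
return to the zero state. -/
theorem Uprime_block_encodes_diag (h : ℕ) (hh : 1 ≤ h)
    (U : Matrix (Fin (2 ^ h)) (Fin (2 ^ h)) ℂ)
    (hU₁ : U * Uᴴ = 1) (hU₂ : Uᴴ * U = 1) :
    (Uprime h U * (Uprime h U)ᴴ = 1 ∧ (Uprime h U)ᴴ * Uprime h U = 1) ∧
    (∀ k : Fin (2 ^ h), ∀ z : Ix h,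
      (Uprime h U).mulVec (fun x => if x = (0, (0, (0, 0, k))) then 1 else 0)
          (0, (0, z)) =
        (1 / 2 : ℂ) * U k 0 * eVec h k z) ∧
    (∀ k k' : Fin (2 ^ h),
      Uprime h U (0, (0, (0, 0, k))) (0, (0, (0, 0, k'))) =
        (1 / 2 : ℂ) * (if k = k' then U k 0 else 0)) :=
  Uprime_block_encodes_diag_general h U hU₁

end DiagBlockEncoding
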